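/- Let B be a maximal d-Brauer relation on an N-gon with N = (d+1)n+d-1, let X ∈ B be a d-diagonal of the form (i, i+d+(d+1)j), and let Π₁, Π₂ be the two connected components of the polygon minus X. Then the sets B ∩ Π₁ and B ∩ Π₂ of diagonals of B contained in each component have cardinalities j and n-j-1 (in some order). -/

import Mathlib

namespace BrauerComb

/-- `x` lies strictly between `a` and `b` in clockwise order on the `N`-gon,
where vertices are numbered clockwise by `ZMod N`. -/
def Between {N : ℕ} (a b x : ZMod N) : Prop :=
  0 < (x - a).val ∧ (x - a).val < (b - a).val

/-- Two chords of the `N`-gon cross in the interior. -/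
def Crosses {N : ℕ} (X Y : Sym2 (ZMod N)) : Prop :=
  ∃ a b c e : ZMod N, X = s(a, b) ∧ Y = s(c, e) ∧ Xor' (Between a b c) (Between a b e)

/-- Two chords are disjoint: they share no vertex and do not cross. -/
def DisjointDiag {N : ℕ} (X Y : Sym2 (ZMod N)) : Prop :=
  (∀ v : ZMod N, ¬ (v ∈ X ∧ v ∈ Y)) ∧ ¬ Crosses X Y

/-- A `d`-diagonal of the `N`-gon: a diagonal of the form `(i, i + d + j*(d+1))`
with `0 ≤ j ≤ n - 1`. -/
def IsDDiag {N : ℕ} (d n : ℕ) (X : Sym2 (ZMod N)) : Prop :=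
  ∃ (i : ZMod N) (j : ℕ), j ≤ n - 1 ∧ X = s(i, i + ((d + (d + 1) * j : ℕ) : ZMod N))

/-- A `d`-Brauer relation: a set of pairwise disjoint `d`-diagonals. -/
def IsBrauer {N : ℕ} (d n : ℕ) (B : Set (Sym2 (ZMod N))) : Prop :=
  (∀ X ∈ B, IsDDiag d n X) ∧ ∀ X ∈ B, ∀ Y ∈ B, X ≠ Y → DisjointDiag X Y

/-- A maximal `d`-Brauer relation. -/
def IsMaxBrauer {N : ℕ} (d n : ℕ) (B : Set (Sym2 (ZMod N))) : Prop :=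
  IsBrauer d n B ∧ ∀ B' : Set (Sym2 (ZMod N)), IsBrauer d n B' → B ⊆ B' → B' = B

end BrauerComb

/-!
Measure positions clockwise from the endpoint `i` of `X`, so that `X` becomes the interval `[0, L]`,
`L = d + (d + 1) j`, and its two sides become the open intervals `(0, L)` and `(L, N)`. In these
coordinates a `d`-diagonal spans a multiple of `d + 1` vertices, and two diagonals are disjoint
exactly when the intervals they span are disjoint or strictly nested; every other diagonal of `B`
lies on one side of `X`, and maximality of `B` says no further admissible chord fits on either side.

On a side with `(d + 1) K + d - 1` interior vertices such a saturated family leaves at most `d`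
vertices uncovered, and by induction over outermost chords it covers exactly `d + 1` vertices per
chord. So it has `K` chords: `j` on the first side and `n - j - 1` on the second.
-/

namespace BrauerComb

def ChordCompatible (c c' : ℕ × ℕ) : Prop :=
  c.2 < c'.1 ∨ c'.2 < c.1 ∨ (c.1 < c'.1 ∧ c'.2 < c.2) ∨ (c'.1 < c.1 ∧ c.2 < c'.2)

lemma ChordCompatible.symm {c c' : ℕ × ℕ} (h : ChordCompatible c c') : ChordCompatible c' c := by
  unfold ChordCompatible at *
  omega

/-- The pattern a `d`-Brauer relation draws on one side of one of its diagonals, in coordinates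
along that side. -/
def IsChordSystem (d s t : ℕ) (T : Finset (ℕ × ℕ)) : Prop :=
  (∀ c ∈ T, s < c.1 ∧ c.1 < c.2 ∧ c.2 < t ∧ d + 1 ∣ c.2 + 1 - c.1) ∧
  ∀ c ∈ T, ∀ c' ∈ T, c ≠ c' → ChordCompatible c c'

def IsSaturated (d s t : ℕ) (T : Finset (ℕ × ℕ)) : Prop :=
  ∀ x y : ℕ, s < x → x < y → y < t → d + 1 ∣ y + 1 - x → ¬ ∀ c ∈ T, ChordCompatible (x, y) c

def cover (T : Finset (ℕ × ℕ)) : Finset ℕ :=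
  T.sup fun c => Finset.Icc c.1 c.2

def chordsInside (c : ℕ × ℕ) (T : Finset (ℕ × ℕ)) : Finset (ℕ × ℕ) :=
  T.filter fun c' => c.1 < c'.1 ∧ c'.2 < c.2

def chordsRightOf (c : ℕ × ℕ) (T : Finset (ℕ × ℕ)) : Finset (ℕ × ℕ) :=
  T.filter fun c' => c.2 < c'.1

lemma eq_add_of_dvd_of_lt_of_le {d a b : ℕ} (hd : 1 ≤ d) (ha : d + 1 ∣ a) (hb : d + 1 ∣ b)
    (hab : a < b) (hba : b ≤ a + d + 2) : b = a + (d + 1) := by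
  obtain ⟨u, rfl⟩ := ha
  obtain ⟨v, rfl⟩ := hb
  have huv : u < v := Nat.lt_of_mul_lt_mul_left hab
  have hvu : v < u + 2 := Nat.lt_of_mul_lt_mul_left (a := d + 1) (by rw [mul_add]; omega)
  obtain rfl : v = u + 1 := by omega
  ring

section ChordSystem

variable {d s t : ℕ} {T T' : Finset (ℕ × ℕ)}

lemma mem_cover {x : ℕ} : x ∈ cover T ↔ ∃ c ∈ T, c.1 ≤ x ∧ x ≤ c.2 := by
  simp [cover]

lemma chordCompatible_of_notMem_cover {x y : ℕ} {c : ℕ × ℕ} (hc : c ∈ T) (hxy : x < y)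
    (hx : x ∉ cover T) (hy : y ∉ cover T) : ChordCompatible (x, y) c := by
  simp only [mem_cover, not_exists, not_and, not_le] at hx hy
  have := hx c hc
  have := hy c hc
  unfold ChordCompatible
  omega

namespace IsChordSystem

lemma mono (h : IsChordSystem d s t T) (hT' : T' ⊆ T) : IsChordSystem d s t T' :=
  ⟨fun c hc => h.1 c (hT' hc), fun c hc c' hc' => h.2 c (hT' hc) c' (hT' hc')⟩

lemma cover_subset (h : IsChordSystem d s t T) : cover T ⊆ Finset.Ioo s t := by
  intro x hx
  obtain ⟨c, hc, h1, h2⟩ := mem_cover.1 hx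
  have := h.1 c hc
  rw [Finset.mem_Ioo]
  omega

lemma inside {c₀ : ℕ × ℕ} (h : IsChordSystem d s t T) :
    IsChordSystem d c₀.1 c₀.2 (chordsInside c₀ T) := by
  refine ⟨fun c hc => ?_, fun c hc c' hc' => h.2 c (Finset.filter_subset _ _ hc) c'
    (Finset.filter_subset _ _ hc')⟩
  rw [chordsInside, Finset.mem_filter] at hc
  have := h.1 c hc.1
  exact ⟨hc.2.1, this.2.1, hc.2.2, this.2.2.2⟩

lemma rightOf {c₀ : ℕ × ℕ} (h : IsChordSystem d s t T) :
    IsChordSystem d c₀.2 t (chordsRightOf c₀ T) := by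
  refine ⟨fun c hc => ?_, fun c hc c' hc' => h.2 c (Finset.filter_subset _ _ hc) c'
    (Finset.filter_subset _ _ hc')⟩
  rw [chordsRightOf, Finset.mem_filter] at hc
  have := h.1 c hc.1
  exact ⟨hc.2, this.2.1, this.2.2.1, this.2.2.2⟩

lemma leftmost_cases {c₀ c : ℕ × ℕ} (h : IsChordSystem d s t T) (hc₀ : c₀ ∈ T)
    (hmin : ∀ c ∈ T, c₀.1 ≤ c.1) (hc : c ∈ T) (hne : c ≠ c₀) :
    c₀.2 < c.1 ∨ (c₀.1 < c.1 ∧ c.2 < c₀.2) := by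
  have := h.2 c hc c₀ hc₀ hne
  have := hmin c hc
  have := h.1 c hc
  have := h.1 c₀ hc₀
  unfold ChordCompatible at *
  omega

lemma card_eq_of_leftmost {c₀ : ℕ × ℕ} (h : IsChordSystem d s t T) (hc₀ : c₀ ∈ T)
    (hmin : ∀ c ∈ T, c₀.1 ≤ c.1) :
    T.card = (chordsInside c₀ T).card + (chordsRightOf c₀ T).card + 1 := by
  have hc₀len := h.1 c₀ hc₀
  have hsplit : T = insert c₀ (chordsInside c₀ T ∪ chordsRightOf c₀ T) := by
    ext c
    simp only [Finset.mem_insert, Finset.mem_union, chordsInside, chordsRightOf,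
      Finset.mem_filter]
    by_cases hne : c = c₀
    · subst hne
      simp [hc₀]
    · have := h.leftmost_cases hc₀ hmin (c := c)
      tauto
  rw [congrArg Finset.card hsplit, Finset.card_insert_of_notMem, Finset.card_union_of_disjoint]
  · rw [Finset.disjoint_left]
    intro c hc hc'
    simp only [chordsInside, chordsRightOf, Finset.mem_filter] at hc hc'
    have := h.1 c hc.1
    omega
  · simp only [Finset.mem_union, chordsInside, chordsRightOf, Finset.mem_filter]
    omega

lemma card_cover_eq_of_leftmost {c₀ : ℕ × ℕ} (h : IsChordSystem d s t T) (hc₀ : c₀ ∈ T)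
    (hmin : ∀ c ∈ T, c₀.1 ≤ c.1) :
    (cover T).card = c₀.2 + 1 - c₀.1 + (cover (chordsRightOf c₀ T)).card := by
  have hsplit : cover T = Finset.Icc c₀.1 c₀.2 ∪ cover (chordsRightOf c₀ T) := by
    ext x
    simp only [Finset.mem_union, mem_cover, Finset.mem_Icc, chordsRightOf, Finset.mem_filter]
    constructor
    · rintro ⟨c, hc, hx⟩
      by_cases hne : c = c₀
      · subst hne
        exact Or.inl hx
      · rcases h.leftmost_cases hc₀ hmin hc hne with hc' | hc'
        · exact Or.inr ⟨c, ⟨hc, hc'⟩, hx⟩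
        · exact Or.inl ⟨by omega, by omega⟩
    · rintro (hx | ⟨c, ⟨hc, -⟩, hx⟩)
      exacts [⟨c₀, hc₀, hx⟩, ⟨c, hc, hx⟩]
  rw [hsplit, Finset.card_union_of_disjoint, Nat.card_Icc]
  rw [Finset.disjoint_left]
  intro x hx hx'
  obtain ⟨c, hc, hxc⟩ := mem_cover.1 hx'
  simp only [chordsRightOf, Finset.mem_filter] at hc
  rw [Finset.mem_Icc] at hx
  omega

lemma dvd_card_cover (h : IsChordSystem d s t T) : d + 1 ∣ (cover T).card := by
  induction T using Finset.strongInduction generalizing s with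
  | _ T ih =>
    obtain rfl | hne := T.eq_empty_or_nonempty
    · simp [cover]
    obtain ⟨c₀, hc₀, hmin⟩ := T.exists_min_image Prod.fst hne
    have hR : chordsRightOf c₀ T ⊂ T :=
      Finset.filter_ssubset.2 ⟨c₀, hc₀, by have := h.1 c₀ hc₀; omega⟩
    rw [h.card_cover_eq_of_leftmost hc₀ hmin]
    exact dvd_add (h.1 c₀ hc₀).2.2.2 (ih _ hR h.rightOf)

end IsChordSystem

namespace IsSaturated

lemma inside {c₀ : ℕ × ℕ} (h : IsChordSystem d s t T) (hS : IsSaturated d s t T)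
    (hc₀ : c₀ ∈ T) : IsSaturated d c₀.1 c₀.2 (chordsInside c₀ T) := by
  intro x y hx hxy hy hdvd hcompat
  refine hS x y (by have := h.1 c₀ hc₀; omega) hxy (by have := h.1 c₀ hc₀; omega) hdvd
    fun c hc => ?_
  by_cases hne : c = c₀
  · subst hne
    unfold ChordCompatible
    omega
  by_cases hcin : c₀.1 < c.1 ∧ c.2 < c₀.2
  · exact hcompat c (Finset.mem_filter.2 ⟨hc, hcin⟩)
  have := h.2 c hc c₀ hc₀ hne
  have := h.1 c hc
  unfold ChordCompatible at *
  omega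

lemma rightOf {c₀ : ℕ × ℕ} (h : IsChordSystem d s t T) (hS : IsSaturated d s t T)
    (hc₀ : c₀ ∈ T) (hmin : ∀ c ∈ T, c₀.1 ≤ c.1) :
    IsSaturated d c₀.2 t (chordsRightOf c₀ T) := by
  intro x y hx hxy hy hdvd hcompat
  refine hS x y (by have := h.1 c₀ hc₀; omega) hxy hy hdvd fun c hc => ?_
  by_cases hne : c = c₀
  · subst hne
    unfold ChordCompatible
    omega
  rcases h.leftmost_cases hc₀ hmin hc hne with hcr | hcin
  · exact hcompat c (Finset.mem_filter.2 ⟨hc, hcr⟩)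
  · unfold ChordCompatible
    omega

/-- Otherwise the first and the `(d + 1)`-st uncovered point would span an admissible chord: the
points between them are `d - 1` uncovered ones and a union of chords, i.e. a multiple of `d + 1`. -/
lemma card_sdiff_cover_le (hd : 1 ≤ d) (h : IsChordSystem d s t T) (hS : IsSaturated d s t T) :
    (Finset.Ioo s t \ cover T).card ≤ d := by
  set F := Finset.Ioo s t \ cover T with hF
  by_contra! hdF
  set f := F.orderEmbOfFin rfl
  have hfF : ∀ i, f i ∈ F := F.orderEmbOfFin_mem rfl
  set x := f ⟨0, by omega⟩
  set y := f ⟨d, hdF⟩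
  have hxF : x ∈ F := hfF _
  have hyF : y ∈ F := hfF _
  simp only [hF, Finset.mem_sdiff, Finset.mem_Ioo] at hxF hyF
  have hxy : x < y := f.strictMono (Fin.mk_lt_mk.2 (by omega))
  have hfree : ((Finset.Ico x y).filter (· ∉ cover T)).card = d := by
    have : (Finset.Ico x y).filter (· ∉ cover T) = (Finset.Iio ⟨d, hdF⟩).map f.toEmbedding := by
      ext z
      simp only [Finset.mem_filter, Finset.mem_Ico, Finset.mem_map, Finset.mem_Iio]
      constructor
      · rintro ⟨⟨hxz, hzy⟩, hz⟩
        have hzF : z ∈ (F : Set ℕ) := by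
          rw [Finset.mem_coe, hF, Finset.mem_sdiff, Finset.mem_Ioo]
          exact ⟨⟨by omega, by omega⟩, hz⟩
        rw [← Finset.range_orderEmbOfFin F rfl] at hzF
        obtain ⟨i, rfl⟩ := hzF
        exact ⟨i, f.lt_iff_lt.1 hzy, rfl⟩
      · rintro ⟨i, hi, rfl⟩
        have hiF : f i ∈ Finset.Ioo s t \ cover T := hfF i
        rw [Finset.mem_sdiff] at hiF
        exact ⟨⟨f.le_iff_le.2 (Fin.mk_le_mk.2 (Nat.zero_le _)), f.lt_iff_lt.2 hi⟩, hiF.2⟩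
    rw [this, Finset.card_map, Fin.card_Iio]
  set T' := T.filter fun c => x < c.1 ∧ c.2 < y
  have hcovered : (Finset.Ico x y).filter (· ∈ cover T) = cover T' := by
    ext z
    simp only [Finset.mem_filter, Finset.mem_Ico, mem_cover, T']
    constructor
    · rintro ⟨⟨hxz, hzy⟩, c, hc, hzc⟩
      have hxc : ¬ (c.1 ≤ x ∧ x ≤ c.2) := fun hx => hxF.2 (mem_cover.2 ⟨c, hc, hx⟩)
      have hyc : ¬ (c.1 ≤ y ∧ y ≤ c.2) := fun hy => hyF.2 (mem_cover.2 ⟨c, hc, hy⟩)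
      exact ⟨c, ⟨hc, by omega⟩, hzc⟩
    · rintro ⟨c, ⟨hc, hcxy⟩, hzc⟩
      exact ⟨⟨by omega, by omega⟩, c, hc, hzc⟩
  have hcount := Finset.card_filter_add_card_filter_not (s := Finset.Ico x y) (· ∈ cover T)
  rw [hcovered, hfree, Nat.card_Ico] at hcount
  have hdvd : d + 1 ∣ y + 1 - x := by
    rw [show y + 1 - x = (cover T').card + (d + 1) by omega]
    exact Nat.dvd_add_self_right.2 (h.mono (Finset.filter_subset _ _)).dvd_card_cover
  exact hS x y hxF.1.1 hxy hyF.1.2 hdvd fun c hc =>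
    chordCompatible_of_notMem_cover hc hxy hxF.2 hyF.2

/-- Each chord owns its two endpoints and the points inside it left uncovered by the chords it
contains; these are at most `d + 2` and a multiple of `d + 1`, hence exactly `d + 1`. -/
lemma card_cover_eq (hd : 1 ≤ d) (h : IsChordSystem d s t T) (hS : IsSaturated d s t T) :
    (cover T).card = (d + 1) * T.card := by
  induction T using Finset.strongInduction generalizing s t with
  | _ T ih =>
    obtain rfl | hne := T.eq_empty_or_nonempty
    · simp [cover]
    obtain ⟨c₀, hc₀, hmin⟩ := T.exists_min_image Prod.fst hne
    have hc₀len := h.1 c₀ hc₀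
    have hI : chordsInside c₀ T ⊂ T := Finset.filter_ssubset.2 ⟨c₀, hc₀, by omega⟩
    have hR : chordsRightOf c₀ T ⊂ T := Finset.filter_ssubset.2 ⟨c₀, hc₀, by omega⟩
    have hIsys : IsChordSystem d c₀.1 c₀.2 (chordsInside c₀ T) := h.inside
    have hIcov := ih _ hI hIsys (hS.inside h hc₀)
    have hRcov := ih _ hR h.rightOf (hS.rightOf h hc₀ hmin)
    have hIsub := Finset.card_le_card hIsys.cover_subset
    have hIfree := Finset.card_sdiff_add_card_eq_card hIsys.cover_subset
    have hIfree_le := (hS.inside h hc₀).card_sdiff_cover_le hd hIsys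
    rw [Nat.card_Ioo] at hIsub hIfree
    have hlen : c₀.2 + 1 - c₀.1 = (cover (chordsInside c₀ T)).card + (d + 1) :=
      eq_add_of_dvd_of_lt_of_le hd hIsys.dvd_card_cover hc₀len.2.2.2 (by omega) (by omega)
    rw [h.card_cover_eq_of_leftmost hc₀ hmin, h.card_eq_of_leftmost hc₀ hmin, hlen, hIcov,
      hRcov]
    ring

theorem card_eq (hd : 1 ≤ d) {K : ℕ} (h : IsChordSystem d s t T) (hS : IsSaturated d s t T)
    (hK : t = s + (d + 1) * K + d) : T.card = K := by
  have hfree := Finset.card_sdiff_add_card_eq_card h.cover_subset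
  have hfree_le := hS.card_sdiff_cover_le hd h
  rw [Nat.card_Ioo, hS.card_cover_eq hd h] at hfree
  apply le_antisymm
  · by_contra! hlt
    have := Nat.mul_le_mul_left (d + 1) (Nat.succ_le_of_lt hlt)
    rw [Nat.mul_succ] at this
    omega
  · by_contra! hlt
    have := Nat.mul_le_mul_left (d + 1) (Nat.succ_le_of_lt hlt)
    rw [Nat.mul_succ] at this
    omega

end IsSaturated

end ChordSystem

section Polygon

variable {N : ℕ} (a : ZMod N)

def chordAt (c : ℕ × ℕ) : Sym2 (ZMod N) :=
  s(a + c.1, a + c.2)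

lemma exists_eq_add_natCast [NeZero N] (v : ZMod N) : ∃ w < N, v = a + w :=
  ⟨(v - a).val, ZMod.val_lt _, by rw [ZMod.natCast_val, ZMod.cast_id]; ring⟩

lemma add_natCast_inj {u v : ℕ} (hu : u < N) (hv : v < N) :
    a + (u : ZMod N) = a + v ↔ u = v := by
  rw [add_right_inj]
  constructor
  · intro h
    simpa [ZMod.val_natCast, Nat.mod_eq_of_lt hu, Nat.mod_eq_of_lt hv] using congrArg ZMod.val h
  · rintro rfl
    rfl

lemma val_add_natCast_sub_add_natCast {u w : ℕ} (hu : u < N) (hw : w < N) :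
    (a + w - (a + u) : ZMod N).val = if u ≤ w then w - u else w + N - u := by
  have : a + w - (a + u) = ((w + (N - u) : ℕ) : ZMod N) := by
    push_cast [Nat.cast_sub hu.le, ZMod.natCast_self]
    ring
  rw [this, ZMod.val_natCast]
  split_ifs with huw
  · rw [show w + (N - u) = w - u + N by omega, Nat.add_mod_right, Nat.mod_eq_of_lt (by omega)]
  · rw [Nat.mod_eq_of_lt (by omega)]
    omega

lemma between_add_natCast_iff {u v w : ℕ} (hu : u < N) (hv : v < N) (hw : w < N) :
    Between (a + (u : ZMod N)) (a + (v : ZMod N)) (a + (w : ZMod N)) ↔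
      0 < (if u ≤ w then w - u else w + N - u) ∧
        (if u ≤ w then w - u else w + N - u) < (if u ≤ v then v - u else v + N - u) := by
  rw [Between, val_add_natCast_sub_add_natCast a hu hw, val_add_natCast_sub_add_natCast a hu hv]

lemma add_natCast_mem_chordAt {w : ℕ} {c : ℕ × ℕ} (hw : w < N) (hc₁ : c.1 < N) (hc₂ : c.2 < N) :
    a + (w : ZMod N) ∈ chordAt a c ↔ w = c.1 ∨ w = c.2 := by
  rw [chordAt, Sym2.mem_iff, add_natCast_inj a hw hc₁, add_natCast_inj a hw hc₂]

lemma chordAt_inj {c c' : ℕ × ℕ} (hc : c.1 < c.2) (hcN : c.2 < N) (hc' : c'.1 < c'.2)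
    (hc'N : c'.2 < N) : chordAt a c = chordAt a c' ↔ c = c' := by
  refine ⟨fun h => ?_, congrArg _⟩
  rw [chordAt, chordAt, Sym2.eq_iff, add_natCast_inj a (by omega) (by omega),
    add_natCast_inj a hcN hc'N, add_natCast_inj a (by omega) hc'N,
    add_natCast_inj a hcN (by omega)] at h
  rcases h with ⟨h₁, h₂⟩ | ⟨h₁, h₂⟩
  · exact Prod.ext h₁ h₂
  · omega

lemma disjointDiag_chordAt_iff [NeZero N] {c c' : ℕ × ℕ} (hc : c.1 < c.2) (hcN : c.2 < N)
    (hc' : c'.1 < c'.2) (hc'N : c'.2 < N) :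
    DisjointDiag (chordAt a c) (chordAt a c') ↔ ChordCompatible c c' := by
  obtain ⟨p, q⟩ := c
  obtain ⟨p', q'⟩ := c'
  dsimp only at hc hcN hc' hc'N
  have hp : p < N := by omega
  have hp' : p' < N := by omega
  have hbet := fun {u v w : ℕ} (hu : u < N) (hv : v < N) (hw : w < N) =>
    between_add_natCast_iff a hu hv hw
  unfold DisjointDiag ChordCompatible
  constructor
  · rintro ⟨hvert, hcross⟩
    have hdist : ∀ w < N, ¬ ((w = p ∨ w = q) ∧ (w = p' ∨ w = q')) := fun w hw hpq =>
      hvert _ ⟨(add_natCast_mem_chordAt a hw hp hcN).2 hpq.1,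
        (add_natCast_mem_chordAt a hw hp' hc'N).2 hpq.2⟩
    have := hdist p hp
    have := hdist q hcN
    by_contra hnest
    refine hcross ⟨_, _, _, _, rfl, rfl, ?_⟩
    refine xor_def.2 ?_
    rw [hbet hp hcN hp', hbet hp hcN hc'N]
    split_ifs <;> omega
  · intro hcompat
    refine ⟨fun v ⟨hv, hv'⟩ => ?_, ?_⟩
    · obtain ⟨w, hw, rfl⟩ := exists_eq_add_natCast a v
      rw [add_natCast_mem_chordAt a hw hp hcN] at hv
      rw [add_natCast_mem_chordAt a hw hp' hc'N] at hv'
      omega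
    · rintro ⟨α, β, γ, ε, hX, hY, hxor⟩
      replace hxor := xor_def.1 hxor
      rw [chordAt, Sym2.eq_iff] at hX hY
      rcases hX with ⟨rfl, rfl⟩ | ⟨rfl, rfl⟩ <;> rcases hY with ⟨rfl, rfl⟩ | ⟨rfl, rfl⟩ <;>
        simp only [hbet hp hcN hp', hbet hp hcN hc'N, hbet hcN hp hp',
          hbet hcN hp hc'N] at hxor <;>
        split_ifs at hxor <;> omega

lemma between_self_add_natCast_iff {L w : ℕ} (hL : L < N) (hw : w < N) :
    Between a (a + (L : ZMod N)) (a + (w : ZMod N)) ↔ 0 < w ∧ w < L := by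
  simpa using between_add_natCast_iff a (u := 0) (by omega) hL hw

lemma between_add_natCast_self_iff {L w : ℕ} (hL : 0 < L) (hLN : L < N) (hw : w < N) :
    Between (a + (L : ZMod N)) a (a + (w : ZMod N)) ↔ L < w ∧ w < N := by
  have h := between_add_natCast_iff a (v := 0) hLN (by omega) hw
  simp only [Nat.cast_zero, add_zero] at h
  rw [h]
  split_ifs <;> omega

section Brauer

variable {d n : ℕ} {B : Set (Sym2 (ZMod N))}

lemma isDDiag_chordAt (hN : N = (d + 1) * n + d - 1) {c : ℕ × ℕ} (hc : c.1 < c.2)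
    (hcN : c.2 < N) (hdvd : d + 1 ∣ c.2 + 1 - c.1) : IsDDiag d n (chordAt a c) := by
  obtain ⟨k, hk⟩ := hdvd
  obtain ⟨m, rfl⟩ : ∃ m, k = m + 1 := Nat.exists_eq_succ_of_ne_zero (by rintro rfl; omega)
  rw [mul_add, mul_one] at hk
  have hmn : m < n := Nat.lt_of_mul_lt_mul_left (a := d + 1) (by omega)
  refine ⟨a + c.1, m, by omega, ?_⟩
  rw [chordAt, show c.2 = c.1 + (d + (d + 1) * m) by omega, Nat.cast_add c.1, add_assoc]

lemma IsDDiag.exists_eq_chordAt [NeZero N] (hd : 1 ≤ d) (hn : 0 < n)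
    (hN : N = (d + 1) * n + d - 1) {Y : Sym2 (ZMod N)} (hY : IsDDiag d n Y) :
    ∃ c : ℕ × ℕ, c.1 < c.2 ∧ c.2 < N ∧ d + 1 ∣ c.2 + 1 - c.1 ∧ Y = chordAt a c := by
  obtain ⟨i, m, hm, rfl⟩ := hY
  obtain ⟨p, hp, rfl⟩ := exists_eq_add_natCast a i
  obtain ⟨r, rfl⟩ : ∃ r, n = m + r + 1 := ⟨n - 1 - m, by omega⟩
  rw [mul_add, mul_add, mul_one] at hN
  set δ := d + (d + 1) * m with hδ
  rcases lt_or_ge (p + δ) N with hwrap | hwrap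
  · refine ⟨(p, p + δ), by omega, hwrap, ⟨m + 1, by rw [mul_add, mul_one]; omega⟩, ?_⟩
    rw [chordAt, Nat.cast_add p, add_assoc]
  · -- the diagonal straddles `a`, so in coordinates its endpoints come in the other order
    refine ⟨(p + δ - N, p), by omega, hp, ⟨r + 1, by rw [mul_add, mul_one]; omega⟩, ?_⟩
    rw [chordAt, Sym2.eq_swap, Nat.cast_sub hwrap, ZMod.natCast_self, sub_zero,
      Nat.cast_add p, add_assoc]

lemma IsBrauer.dvd_of_chordAt_mem [NeZero N] (hd : 1 ≤ d) (hn : 0 < n)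
    (hN : N = (d + 1) * n + d - 1) (hB : IsBrauer d n B) {c : ℕ × ℕ} (hc : c.1 < c.2)
    (hcN : c.2 < N) (hcB : chordAt a c ∈ B) : d + 1 ∣ c.2 + 1 - c.1 := by
  obtain ⟨c', hc', hc'N, hdvd, heq⟩ := (hB.1 _ hcB).exists_eq_chordAt a hd hn hN
  rwa [(chordAt_inj a hc hcN hc' hc'N).1 heq]

lemma IsBrauer.chordCompatible [NeZero N] (hB : IsBrauer d n B) {c c' : ℕ × ℕ}
    (hc : c.1 < c.2) (hcN : c.2 < N) (hc' : c'.1 < c'.2) (hc'N : c'.2 < N)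
    (hcB : chordAt a c ∈ B) (hc'B : chordAt a c' ∈ B) (hne : c ≠ c') : ChordCompatible c c' :=
  (disjointDiag_chordAt_iff a hc hcN hc' hc'N).1
    (hB.2 _ hcB _ hc'B (mt (chordAt_inj a hc hcN hc' hc'N).1 hne))

lemma IsMaxBrauer.mem_of_disjointDiag {Z : Sym2 (ZMod N)} (hB : IsMaxBrauer d n B)
    (hZ : IsDDiag d n Z) (hdisj : ∀ V ∈ B, V ≠ Z → DisjointDiag Z V ∧ DisjointDiag V Z) :
    Z ∈ B := by
  have hBZ : IsBrauer d n (insert Z B) := by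
    refine ⟨fun V hV => ?_, fun V hV V' hV' hne => ?_⟩
    · rcases hV with rfl | hV
      exacts [hZ, hB.1.1 V hV]
    · rcases hV with rfl | hV <;> rcases hV' with rfl | hV'
      · exact absurd rfl hne
      · exact (hdisj V' hV' (Ne.symm hne)).1
      · exact (hdisj V hV hne).2
      · exact hB.1.2 V hV V' hV' hne
  rw [← hB.2 _ hBZ (Set.subset_insert Z B)]
  exact Set.mem_insert Z B

open Classical in
noncomputable def chordsOn (B : Set (Sym2 (ZMod N))) (s t : ℕ) : Finset (ℕ × ℕ) :=
  (Finset.Ioo s t ×ˢ Finset.Ioo s t).filter fun c => c.1 < c.2 ∧ chordAt a c ∈ B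

lemma mem_chordsOn {s t : ℕ} {c : ℕ × ℕ} :
    c ∈ chordsOn a B s t ↔ s < c.1 ∧ c.1 < c.2 ∧ c.2 < t ∧ chordAt a c ∈ B := by
  simp only [chordsOn, Finset.mem_filter, Finset.mem_product, Finset.mem_Ioo]
  constructor
  · rintro ⟨⟨⟨hs, -⟩, -, ht⟩, hc, hcB⟩
    exact ⟨hs, hc, ht, hcB⟩
  · rintro ⟨hs, hc, ht, hcB⟩
    exact ⟨⟨⟨hs, by omega⟩, by omega, ht⟩, hc, hcB⟩

lemma IsBrauer.isChordSystem_chordsOn [NeZero N] (hd : 1 ≤ d) (hn : 0 < n)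
    (hN : N = (d + 1) * n + d - 1) (hB : IsBrauer d n B) {s t : ℕ} (htN : t ≤ N) :
    IsChordSystem d s t (chordsOn a B s t) := by
  refine ⟨fun c hc => ?_, fun c hc c' hc' hne => ?_⟩
  · obtain ⟨hs, hc, ht, hcB⟩ := (mem_chordsOn a).1 hc
    exact ⟨hs, hc, ht, hB.dvd_of_chordAt_mem a hd hn hN hc (by omega) hcB⟩
  · obtain ⟨-, hc, ht, hcB⟩ := (mem_chordsOn a).1 hc
    obtain ⟨-, hc', ht', hc'B⟩ := (mem_chordsOn a).1 hc'
    exact hB.chordCompatible a hc (by omega) hc' (by omega) hcB hc'B hne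

/-- Every diagonal of `B` other than `chordAt a (0, L)` lies on one side of it, so only those on
the side `(s, t)` can obstruct a chord there. -/
lemma IsMaxBrauer.isSaturated_chordsOn [NeZero N] (hd : 1 ≤ d) (hn : 0 < n)
    (hN : N = (d + 1) * n + d - 1) (hB : IsMaxBrauer d n B) {L s t : ℕ}
    (hX : chordAt a (0, L) ∈ B) (hL : 0 < L) (hLN : L < N)
    (hside : (s = 0 ∧ t = L) ∨ (s = L ∧ t = N)) :
    IsSaturated d s t (chordsOn a B s t) := by
  intro x y hx hxy hy hdvd hcompat
  have hZB : chordAt a (x, y) ∈ B := by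
    refine hB.mem_of_disjointDiag (isDDiag_chordAt a hN hxy (by omega) hdvd) fun V hV _ => ?_
    obtain ⟨c, hc, hcN, -, rfl⟩ := (hB.1.1 V hV).exists_eq_chordAt a hd hn hN
    have hcompat_c : ChordCompatible (x, y) c := by
      by_cases hcX : c = (0, L)
      · subst hcX
        unfold ChordCompatible
        omega
      by_cases hcT : c ∈ chordsOn a B s t
      · exact hcompat c hcT
      have hXc := hB.1.chordCompatible a hL hLN hc hcN hX hV (Ne.symm hcX)
      simp only [mem_chordsOn, hV, and_true] at hcT
      unfold ChordCompatible at *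
      omega
    exact ⟨(disjointDiag_chordAt_iff a hxy (by omega) hc hcN).2 hcompat_c,
      (disjointDiag_chordAt_iff a hc hcN hxy (by omega)).2 hcompat_c.symm⟩
  have := hcompat (x, y) ((mem_chordsOn a).2 ⟨hx, hxy, hy, hZB⟩)
  unfold ChordCompatible at this
  omega

lemma IsBrauer.ncard_setOf_eq_card_chordsOn [NeZero N] (hd : 1 ≤ d) (hn : 0 < n)
    (hN : N = (d + 1) * n + d - 1) (hB : IsBrauer d n B) {s t : ℕ} (htN : t ≤ N)
    {P : ZMod N → Prop} (hP : ∀ w < N, P (a + w) ↔ s < w ∧ w < t) :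
    {Y | Y ∈ B ∧ ∀ v ∈ Y, P v}.ncard = (chordsOn a B s t).card := by
  have himage : {Y | Y ∈ B ∧ ∀ v ∈ Y, P v} = chordAt a '' (chordsOn a B s t : Set (ℕ × ℕ)) := by
    ext Y
    simp only [Set.mem_ofPred_eq, Set.mem_image, Finset.mem_coe, mem_chordsOn]
    constructor
    · rintro ⟨hY, hPY⟩
      obtain ⟨c, hc, hcN, -, rfl⟩ := (hB.1 Y hY).exists_eq_chordAt a hd hn hN
      have h₁ := (hP c.1 (by omega)).1 (hPY _ (Sym2.mem_mk_left _ _))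
      have h₂ := (hP c.2 hcN).1 (hPY _ (Sym2.mem_mk_right _ _))
      exact ⟨c, ⟨h₁.1, hc, h₂.2, hY⟩, rfl⟩
    · rintro ⟨c, ⟨hs, hc, ht, hcB⟩, rfl⟩
      refine ⟨hcB, fun v hv => ?_⟩
      obtain ⟨w, hw, rfl⟩ := exists_eq_add_natCast a v
      rw [add_natCast_mem_chordAt a hw (by omega) (by omega)] at hv
      exact (hP w hw).2 (by omega)
  rw [himage, Set.InjOn.ncard_image, Set.ncard_coe_finset]
  intro c hc c' hc' heq
  rw [Finset.mem_coe, mem_chordsOn] at hc hc'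
  exact (chordAt_inj a hc.2.1 (by omega) hc'.2.1 (by omega)).1 heq

theorem IsMaxBrauer.card_chordsOn [NeZero N] (hd : 1 ≤ d) (hn : 0 < n)
    (hN : N = (d + 1) * n + d - 1) (hB : IsMaxBrauer d n B) {L s t K : ℕ}
    (hX : chordAt a (0, L) ∈ B) (hL : 0 < L) (hLN : L < N)
    (hside : (s = 0 ∧ t = L) ∨ (s = L ∧ t = N)) (hK : t = s + (d + 1) * K + d) :
    (chordsOn a B s t).card = K :=
  (hB.isSaturated_chordsOn a hd hn hN hX hL hLN hside).card_eq hd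
    (hB.1.isChordSystem_chordsOn a hd hn hN (by omega)) hK

end Brauer

end Polygon

/-- Let `B` be a maximal `d`-Brauer relation and `X = (i, i+d+(d+1)j) ∈ B`.  The diagonals
of `B` lying in the two connected components of the polygon minus `X` (i.e. having all
their vertices strictly on one side of `X`) number `j` and `n-j-1` in some order. -/
theorem component_counts {d n N : ℕ} (hd : 1 ≤ d) (hn : 0 < n)
    (hN : N = (d + 1) * n + d - 1) (B : Set (Sym2 (ZMod N)))
    (hB : IsMaxBrauer d n B) (i : ZMod N) (j : ℕ) (hj : j ≤ n - 1)
    (hX : s(i, i + ((d + (d + 1) * j : ℕ) : ZMod N)) ∈ B) :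
    ({Y | Y ∈ B ∧ ∀ v ∈ Y, Between i (i + ((d + (d + 1) * j : ℕ) : ZMod N)) v}.ncard = j ∧
       {Y | Y ∈ B ∧ ∀ v ∈ Y, Between (i + ((d + (d + 1) * j : ℕ) : ZMod N)) i v}.ncard
         = n - j - 1) ∨
    ({Y | Y ∈ B ∧ ∀ v ∈ Y, Between i (i + ((d + (d + 1) * j : ℕ) : ZMod N)) v}.ncard
         = n - j - 1 ∧
       {Y | Y ∈ B ∧ ∀ v ∈ Y, Between (i + ((d + (d + 1) * j : ℕ) : ZMod N)) i v}.ncard = j) := by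
  left
  obtain ⟨r, rfl⟩ : ∃ r, n = j + r + 1 := ⟨n - 1 - j, by omega⟩
  have hNsplit : N = (d + 1) * j + (d + 1) * r + 2 * d := by
    rw [hN, mul_add, mul_add, mul_one]
    omega
  have : NeZero N := ⟨by omega⟩
  set L := d + (d + 1) * j
  have hLN : L < N := by omega
  have hX' : chordAt i (0, L) ∈ B := by simpa [chordAt] using hX
  constructor
  · rw [hB.1.ncard_setOf_eq_card_chordsOn i hd hn hN hLN.le
      fun w hw => between_self_add_natCast_iff i hLN hw]
    exact hB.card_chordsOn i hd hn hN hX' (by omega) hLN (Or.inl ⟨rfl, rfl⟩) (by omega)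
  · rw [hB.1.ncard_setOf_eq_card_chordsOn i hd hn hN le_rfl
      fun w hw => between_add_natCast_self_iff i (by omega) hLN hw]
    exact hB.card_chordsOn i hd hn hN hX' (by omega) hLN (Or.inr ⟨rfl, rfl⟩)
      (by rw [show j + r + 1 - j - 1 = r by omega]; omega)

end BrauerComb
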